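/- arXiv:1406.2196 — 4 statements merged into one kernel-verified Lean document; each statement's English description precedes it below -/
import Mathlib

section
/- Let n ≥ 3 and let I be a nonempty proper subset of the vertex set of the cycle graph C_n on ZMod n. Then the number of connected components of the subgraph of C_n induced by I equals the number of connected components of the subgraph induced by the complement of I. -/
/-!
Every component of the subgraph induced by a proper subset `J` of the cycle is a run of
consecutive vertices and is determined by its last vertex, i.e. by an `i ∈ J` with `i + 1 ∉ J`.
So the components of `J` are counted by the exits `i ∈ J, i + 1 ∉ J` and those of `Jᶜ` by the
entries `i ∉ J, i + 1 ∈ J`. Exits and entries are equinumerous because `J` and its translate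
`J - 1` have the same size.
-/

/-- The cycle graph on `ZMod n`: `i` and `j` are adjacent iff `j = i + 1` or `i = j + 1`. -/
def cycleGraph (n : ℕ) : SimpleGraph (ZMod n) :=
  SimpleGraph.fromRel (fun i j => j = i + 1)

theorem Set.encard_setOf_mem_and_add_notMem {G : Type*} [AddGroup G] {J : Set G}
    (hJ : J.Finite) (g : G) :
    {i | i ∈ J ∧ i + g ∉ J}.encard = {i | i ∉ J ∧ i + g ∈ J}.encard := by
  have hshift : J.encard = ((· + g) ⁻¹' J).encard :=
    (Set.encard_preimage_of_bijective (AddGroup.addRight_bijective g) J).symm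
  rw [Set.encard_eq_encard_iff_encard_sdiff_eq_encard_sdiff (hJ.inter_of_left _)] at hshift
  convert hshift using 2
  · rfl
  · ext i
    exact and_comm

namespace cycleGraph

section Runs

variable {n : ℕ} (J : Set (ZMod n))

/-- For `J = Set.univ` the set is empty and `sInf` returns the junk value `0`. -/
noncomputable def runLength (v : ZMod n) : ℕ :=
  sInf {k : ℕ | v + k + 1 ∉ J}

noncomputable def runEnd (v : ZMod n) : ZMod n :=
  v + runLength J v

variable {J}

theorem runLength_of_add_one_notMem {v : ZMod n} (hv : v + 1 ∉ J) : runLength J v = 0 :=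
  Nat.sInf_eq_zero.mpr (Or.inl (by simpa using hv))

theorem runEnd_eq_self {v : ZMod n} (hv : v + 1 ∉ J) : runEnd J v = v := by
  simp [runEnd, runLength_of_add_one_notMem hv]

theorem runEnd_mem {v : ZMod n} (hv : v ∈ J) : runEnd J v ∈ J := by
  rcases h : runLength J v with _ | m
  · simpa [runEnd, h] using hv
  · have hm : v + m + 1 ∈ J := by
      simpa using Nat.notMem_of_lt_sInf (s := {k : ℕ | v + k + 1 ∉ J}) (m := m)
        (by rw [← runLength, h]; omega)
    simpa [runEnd, h, add_assoc] using hm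

variable [NeZero n] (hJ : J ≠ Set.univ)
include hJ

theorem nonempty_setOf_add_add_one_notMem (v : ZMod n) : {k : ℕ | v + k + 1 ∉ J}.Nonempty := by
  obtain ⟨x, hx⟩ := (Set.ne_univ_iff_exists_notMem J).mp hJ
  have hval : v + ((x - v - 1).val : ZMod n) + 1 = x := by
    rw [ZMod.natCast_zmod_val]
    ring
  exact ⟨(x - v - 1).val, by rwa [Set.mem_ofPred_eq, hval]⟩

theorem runEnd_add_one_notMem (v : ZMod n) : runEnd J v + 1 ∉ J :=
  Nat.sInf_mem (nonempty_setOf_add_add_one_notMem hJ v)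

theorem runLength_of_add_one_mem {v : ZMod n} (hv : v + 1 ∈ J) :
    runLength J v = runLength J (v + 1) + 1 := by
  have hpos : 1 ≤ runLength J v := by
    rw [Nat.one_le_iff_ne_zero, runLength, Ne, Nat.sInf_eq_zero, not_or]
    exact ⟨by simpa using hv, (nonempty_setOf_add_add_one_notMem hJ v).ne_empty⟩
  rw [runLength, ← Nat.sInf_add hpos]
  simp only [Nat.cast_add, Nat.cast_one, runLength]
  congr 3
  ext k
  ring_nf

theorem runEnd_add_one {v : ZMod n} (hv : v + 1 ∈ J) : runEnd J (v + 1) = runEnd J v := by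
  rw [runEnd, runEnd, runLength_of_add_one_mem hJ hv]
  push_cast
  ring

end Runs

theorem adj_iff {n : ℕ} {a b : ZMod n} :
    (cycleGraph n).Adj a b ↔ a ≠ b ∧ (b = a + 1 ∨ a = b + 1) :=
  SimpleGraph.fromRel_adj _ _ _

theorem adj_add_one {n : ℕ} [Fact (1 < n)] (v : ZMod n) : (cycleGraph n).Adj v (v + 1) :=
  adj_iff.mpr ⟨by simp, Or.inl rfl⟩

variable {n : ℕ} [NeZero n] {J : Set (ZMod n)}

theorem runEnd_eq_of_adj (hJ : J ≠ Set.univ) {a b : J}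
    (h : ((cycleGraph n).induce J).Adj a b) : runEnd J a = runEnd J b := by
  rcases (adj_iff.mp h).2 with hb | ha
  · exact (runEnd_add_one hJ (hb ▸ b.2)).symm.trans (congrArg _ hb.symm)
  · exact (congrArg _ ha).trans (runEnd_add_one hJ (ha ▸ a.2))

theorem runEnd_eq_of_reachable (hJ : J ≠ Set.univ) {a b : J}
    (h : ((cycleGraph n).induce J).Reachable a b) : runEnd J a = runEnd J b := by
  obtain ⟨p⟩ := h
  induction p with
  | nil => rfl
  | cons hadj _ ih => exact (runEnd_eq_of_adj hJ hadj).trans ih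

theorem reachable_runEnd [Fact (1 < n)] (hJ : J ≠ Set.univ) (v : J) :
    ((cycleGraph n).induce J).Reachable v ⟨runEnd J v, runEnd_mem v.2⟩ := by
  obtain ⟨v, hv⟩ := v
  induction h : runLength J v generalizing v with
  | zero =>
    convert SimpleGraph.Reachable.refl _ using 2
    simp [runEnd, h]
  | succ m ih =>
    have hv1 : v + 1 ∈ J := by
      by_contra hv1
      rw [runLength_of_add_one_notMem hv1] at h
      omega
    have hadj : ((cycleGraph n).induce J).Adj ⟨v, hv⟩ ⟨v + 1, hv1⟩ := adj_add_one v
    have hlen : runLength J (v + 1) = m := by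
      have := runLength_of_add_one_mem hJ hv1
      omega
    convert hadj.reachable.trans (ih (v + 1) hv1 hlen) using 2
    exact (runEnd_add_one hJ hv1).symm

theorem card_connectedComponent_induce [Fact (1 < n)] (hJ : J ≠ Set.univ) :
    Nat.card ((cycleGraph n).induce J).ConnectedComponent =
      {i | i ∈ J ∧ i + 1 ∉ J}.ncard := by
  rw [← Nat.card_coe_set_eq]
  refine Nat.card_eq_of_bijective (SimpleGraph.ConnectedComponent.lift
      (fun v : J => (⟨runEnd J v, runEnd_mem v.2, runEnd_add_one_notMem hJ v⟩ :
        {i | i ∈ J ∧ i + 1 ∉ J}))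
      (fun v w p _ => Subtype.ext (runEnd_eq_of_reachable hJ p.reachable))) ⟨?_, ?_⟩
  · refine SimpleGraph.ConnectedComponent.ind₂ fun v w h => ?_
    refine SimpleGraph.ConnectedComponent.sound ((reachable_runEnd hJ v).trans ?_)
    convert (reachable_runEnd hJ w).symm using 2
    exact congrArg Subtype.val h
  · rintro ⟨i, hi, hi1⟩
    exact ⟨SimpleGraph.connectedComponentMk _ ⟨i, hi⟩, Subtype.ext (runEnd_eq_self hi1)⟩

end cycleGraph

theorem stmt0 (n : ℕ) (hn : 3 ≤ n) (I : Set (ZMod n)) (hne : I.Nonempty)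
    (hI : I ≠ Set.univ) :
    Nat.card ((cycleGraph n).induce I).ConnectedComponent
      = Nat.card ((cycleGraph n).induce Iᶜ).ConnectedComponent := by
  have : Fact (1 < n) := ⟨by omega⟩
  have hIc : Iᶜ ≠ Set.univ := by
    rwa [Ne, Set.compl_univ_iff, ← Ne, ← Set.nonempty_iff_ne_empty]
  rw [cycleGraph.card_connectedComponent_induce hI, cycleGraph.card_connectedComponent_induce hIc,
    Set.ncard_def, Set.ncard_def, Set.encard_setOf_mem_and_add_notMem I.toFinite]
  simp only [Set.mem_compl_iff, not_not]
end

section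
/- Let σ ∈ S_n with n ≥ 3. There exist an element φ ∈ PGL₂(ℂ) of finite order and an injective function x : Fin n → ℙ¹(ℂ) with φ(x i) = x (σ i) for all i, if and only if σ is balanced, i.e., all nontrivial cycles of σ have the same length ℓ ≥ 2 (say there are k of them) and the number of fixed points n - kℓ of σ is at most 2. -/
/-!
A Möbius transformation fixing three points of `ℙ¹` is the identity: their representatives are
eigenvectors of `g`, any two of them form a basis, and writing the third in that basis forces the
two eigenvalues to agree. Since `φ` always has a fixed point `q` (an eigenvector of `g`), a point
`p` with `φ p ≠ p` and `φᵏ p = p` gives three fixed points `p`, `φ p`, `q` of `φᵏ`; hence every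
non-fixed point of `φ` has period exactly `orderOf φ`, and `φ ≠ 1` has at most two fixed points.
Transporting this along the injective equivariant `x` shows that `σ` is balanced.

Conversely, for a balanced `σ` with cycle length `ℓ`, take `φ : z ↦ ζ z` with `ζ` a primitive
`ℓ`-th root of unity: send the fixed points of `σ` to `0` and `∞`, and the point `σᵐ r` of the
cycle with representative `r` to `(c r + 1) ζᵐ`, where `c` numbers the points injectively; the
modulus identifies the cycle and the phase the position in it.
-/

open Function
open scoped Matrix LinearAlgebra.Projectivization

namespace Projectivization

section Field

variable {G K V : Type*} [Field K] [AddCommGroup V] [Module K V] [Group G]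
  [DistribMulAction G V] [SMulCommClass G K V]

lemma smul_eq_self_iff_exists_smul_rep {g : G} {p : ℙ K V} :
    g • p = p ↔ ∃ μ : K, g • p.rep = μ • p.rep := by
  conv_lhs => rw [← mk_rep p, smul_mk, mk_eq_mk_iff']
  exact exists_congr fun _ ↦ eq_comm

lemma eq_of_rep_eq_smul {p q : ℙ K V} {a : K} (h : p.rep = a • q.rep) : p = q := by
  rw [← mk_rep p, ← mk_rep q, mk_eq_mk_iff']
  exact ⟨a, h.symm⟩

theorem smul_eq_self_of_three_fixed (hV : Module.finrank K V = 2) {g : G} {p₁ p₂ p₃ : ℙ K V}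
    (h₁₂ : p₁ ≠ p₂) (h₁₃ : p₁ ≠ p₃) (h₂₃ : p₂ ≠ p₃)
    (hp₁ : g • p₁ = p₁) (hp₂ : g • p₂ = p₂) (hp₃ : g • p₃ = p₃) (q : ℙ K V) : g • q = q := by
  obtain ⟨μ₁, hμ₁⟩ := smul_eq_self_iff_exists_smul_rep.1 hp₁
  obtain ⟨μ₂, hμ₂⟩ := smul_eq_self_iff_exists_smul_rep.1 hp₂
  obtain ⟨μ₃, hμ₃⟩ := smul_eq_self_iff_exists_smul_rep.1 hp₃
  have hind : LinearIndependent K ![p₁.rep, p₂.rep] := by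
    convert independent_iff.1 ((independent_pair_iff_ne p₁ p₂).2 h₁₂) using 1
    ext i; fin_cases i <;> rfl
  have hspan : Submodule.span K {p₁.rep, p₂.rep} = ⊤ := by
    rw [← Matrix.range_cons_cons_empty _ _ ![]]
    exact hind.span_eq_top_of_card_eq_finrank (by simp [hV])
  have hdecomp (v : V) : ∃ a b : K, a • p₁.rep + b • p₂.rep = v :=
    Submodule.mem_span_pair.1 (hspan ▸ Submodule.mem_top)
  have hcoeff {a b a' b' : K} (h : a • p₁.rep + b • p₂.rep = a' • p₁.rep + b' • p₂.rep) :
      a = a' ∧ b = b' := by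
    have := LinearIndependent.pair_iff.1 hind (a - a') (b - b')
      (by rw [sub_smul, sub_smul]; linear_combination (norm := module) h)
    exact ⟨sub_eq_zero.1 this.1, sub_eq_zero.1 this.2⟩
  have hsmul (a b : K) :
      g • (a • p₁.rep + b • p₂.rep) = (a * μ₁) • p₁.rep + (b * μ₂) • p₂.rep := by
    rw [smul_add, smul_comm g a, smul_comm g b, hμ₁, hμ₂, smul_smul, smul_smul]
  obtain ⟨a, b, hab⟩ := hdecomp p₃.rep
  have ha : a ≠ 0 := by
    rintro rfl
    exact h₂₃ (eq_of_rep_eq_smul (by simpa using hab.symm)).symm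
  have hb : b ≠ 0 := by
    rintro rfl
    exact h₁₃ (eq_of_rep_eq_smul (by simpa using hab.symm)).symm
  have hμ : μ₁ = μ₃ ∧ μ₂ = μ₃ := by
    rw [← hab, hsmul, smul_add, smul_smul, smul_smul] at hμ₃
    obtain ⟨h₁, h₂⟩ := hcoeff hμ₃
    exact ⟨mul_left_cancel₀ ha (h₁.trans (mul_comm _ _)),
      mul_left_cancel₀ hb (h₂.trans (mul_comm _ _))⟩
  obtain ⟨c, d, hcd⟩ := hdecomp q.rep
  refine smul_eq_self_iff_exists_smul_rep.2 ⟨μ₃, ?_⟩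
  rw [← hcd, hsmul, hμ.1, hμ.2, smul_add, smul_smul, smul_smul, mul_comm c, mul_comm d]

theorem encard_fixedBy_le_two (hV : Module.finrank K V = 2) {g : G} {q : ℙ K V}
    (hq : g • q ≠ q) : (MulAction.fixedBy (ℙ K V) g).encard ≤ 2 := by
  by_contra! h
  obtain ⟨t, hts, ht⟩ := Set.exists_subset_encard_eq (Order.add_one_le_of_lt h)
  obtain ⟨p₁, p₂, p₃, h₁₂, h₁₃, h₂₃, rfl⟩ := Set.encard_eq_three.1 ht
  have hfix : ∀ p ∈ ({p₁, p₂, p₃} : Set (ℙ K V)), g • p = p := fun p hp ↦ hts hp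
  exact hq (smul_eq_self_of_three_fixed hV h₁₂ h₁₃ h₂₃ (hfix _ (by simp))
    (hfix _ (by simp)) (hfix _ (by simp)) q)

end Field

section IsAlgClosed

variable {G K V : Type*} [Field K] [IsAlgClosed K] [AddCommGroup V] [Module K V] [Group G]
  [DistribMulAction G V] [SMulCommClass G K V]

lemma exists_smul_eq_self [FiniteDimensional K V] [Nontrivial V] (g : G) :
    ∃ p : ℙ K V, g • p = p := by
  obtain ⟨μ, hμ⟩ := Module.End.exists_eigenvalue (DistribSMul.toLinearMap K V g)
  obtain ⟨v, hv⟩ := hμ.exists_hasEigenvector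
  refine ⟨mk K v hv.2, ?_⟩
  rw [smul_mk, mk_eq_mk_iff']
  exact ⟨μ, hv.apply_eq_smul.symm⟩

theorem minimalPeriod_toPerm_eq_orderOf (hV : Module.finrank K V = 2) {g : G} {p : ℙ K V}
    (hp : g • p ≠ p) :
    minimalPeriod (MulAction.toPerm g) p = orderOf (MulAction.toPerm g : Equiv.Perm (ℙ K V)) := by
  have : FiniteDimensional K V := Module.finite_of_finrank_eq_succ hV
  have : Nontrivial V := Module.nontrivial_of_finrank_eq_succ hV
  set m := minimalPeriod (MulAction.toPerm g) p
  have hpow (k : ℕ) (q : ℙ K V) : (MulAction.toPerm g ^ k) q = g ^ k • q := by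
    rw [← MulAction.toPermHom_apply, ← map_pow]; rfl
  refine Nat.dvd_antisymm ?_ (orderOf_dvd_of_pow_eq_one ?_)
  · refine isPeriodicPt_iff_minimalPeriod_dvd.1 ?_
    rw [IsPeriodicPt, IsFixedPt, ← Equiv.Perm.coe_pow, pow_orderOf_eq_one, Equiv.Perm.one_apply]
  · obtain ⟨q, hq⟩ := exists_smul_eq_self (K := K) (V := V) g
    have hm : g ^ m • p = p := by
      rw [← hpow, ← Equiv.Perm.iterate_eq_pow]; exact isPeriodicPt_minimalPeriod _ _
    ext r
    rw [hpow, Equiv.Perm.one_apply]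
    refine smul_eq_self_of_three_fixed hV (p₁ := p) (p₂ := g • p) (p₃ := q) (Ne.symm hp)
      (by rintro rfl; exact hp hq) ?_ hm ?_ ?_ r
    · rintro rfl; exact hp (smul_left_cancel g hq)
    · rw [← mul_smul, ← pow_succ, pow_succ', mul_smul, hm]
    · rw [← hpow]; exact Equiv.Perm.pow_apply_eq_self_of_apply_eq_self hq m

end IsAlgClosed

variable {K : Type*} [Field K]

lemma eq_toPerm_iff_forall_apply_mk {n : Type*} [Fintype n] [DecidableEq n]
    (φ : Equiv.Perm (ℙ K (n → K))) (g : GL n K) :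
    φ = MulAction.toPerm g ↔ ∀ (v : n → K) (hv : v ≠ 0),
      ∃ hv' : (g : Matrix n n K) *ᵥ v ≠ 0, φ (mk K v hv) = mk K ((g : Matrix n n K) *ᵥ v) hv' := by
  constructor
  · rintro rfl v hv
    exact ⟨(smul_ne_zero_iff_ne g).2 hv, rfl⟩
  · intro h
    ext p
    induction p using ind with
    | h v hv =>
      obtain ⟨_, e⟩ := h v hv
      rw [e]; rfl

def ofAffine (z : K) : ℙ K (Fin 2 → K) := mk K ![z, 1] (by simp)

def infinity : ℙ K (Fin 2 → K) := mk K ![1, 0] (by simp)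

lemma ofAffine_injective : Injective (ofAffine (K := K)) := by
  intro z w h
  obtain ⟨a, ha⟩ := (mk_eq_mk_iff' K _ _ _ _).1 h
  have h₀ := congrFun ha 0
  have h₁ := congrFun ha 1
  simp only [Pi.smul_apply, smul_eq_mul, Matrix.cons_val_zero, Matrix.cons_val_one] at h₀ h₁
  simp_all

lemma ofAffine_ne_infinity (z : K) : ofAffine z ≠ infinity := by
  intro h
  obtain ⟨a, ha⟩ := (mk_eq_mk_iff' K _ _ _ _).1 h
  simpa using congrFun ha 1

end Projectivization

namespace Matrix.GeneralLinearGroup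

open Projectivization

variable {K : Type*} [Field K]

def dilation (ζ : K) (hζ : ζ ≠ 0) : GL (Fin 2) K :=
  mkOfDetNeZero (diagonal ![ζ, 1]) (by simpa)

variable {ζ : K} (hζ : ζ ≠ 0)

lemma isOfFinOrder_dilation (h : IsOfFinOrder ζ) : IsOfFinOrder (dilation ζ hζ) := by
  obtain ⟨ℓ, hℓ, hζℓ⟩ := isOfFinOrder_iff_pow_eq_one.1 h
  refine isOfFinOrder_iff_pow_eq_one.2 ⟨ℓ, hℓ, Units.ext ?_⟩
  rw [Units.val_pow_eq_pow_val, Units.val_one, dilation, val_mkOfDetNeZero, diagonal_pow,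
    ← diagonal_one]
  congr 1
  ext i; fin_cases i <;> simp [hζℓ]

lemma dilation_smul_ofAffine (z : K) : dilation ζ hζ • ofAffine z = ofAffine (ζ * z) := by
  simp only [ofAffine, Projectivization.smul_mk]
  congr 1
  ext i; fin_cases i <;> simp [dilation, Units.smul_def]

lemma dilation_smul_infinity : dilation ζ hζ • (infinity : ℙ K (Fin 2 → K)) = infinity := by
  simp only [infinity, Projectivization.smul_mk, mk_eq_mk_iff']
  refine ⟨ζ, ?_⟩
  ext i; fin_cases i <;> simp [dilation, Units.smul_def]

end Matrix.GeneralLinearGroup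

lemma Equiv.Perm.ncard_setOf_sameCycle {α : Type*} [Finite α] (σ : Equiv.Perm α) (i : α) :
    {j | σ.SameCycle i j}.ncard = minimalPeriod σ i := by
  have horbit : {j | σ.SameCycle i j} = MulAction.orbit (Subgroup.zpowers σ) i := by
    ext j
    simp only [Set.mem_ofPred_eq, MulAction.mem_orbit_iff, Subtype.exists,
      Subgroup.mem_zpowers_iff]
    exact ⟨fun ⟨k, hk⟩ ↦ ⟨_, ⟨k, rfl⟩, hk⟩, fun ⟨_, ⟨k, hk⟩, h⟩ ↦ ⟨k, hk ▸ h⟩⟩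
  have := Fintype.ofFinite (MulAction.orbit (Subgroup.zpowers σ) i)
  rw [horbit, ← Nat.card_coe_set_eq, Nat.card_eq_fintype_card]
  exact (MulAction.minimalPeriod_eq_card (a := σ) (b := i)).symm

lemma Function.Semiconj.minimalPeriod_eq {α β : Type*} {x : α → β} {f : α → α} {g : β → β}
    (h : Semiconj x f g) (hx : Injective x) (a : α) :
    minimalPeriod g (x a) = minimalPeriod f a :=
  minimalPeriod_eq_minimalPeriod_iff.2 fun n ↦ by
    rw [IsPeriodicPt, IsFixedPt, ← (h.iterate_right n).eq, hx.eq_iff]; rfl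

lemma IsPrimitiveRoot.zpow_eq_zpow_iff_zpow_apply_eq {G₀ α : Type*} [CommGroupWithZero G₀]
    {ζ : G₀} {ℓ : ℕ} (hζ : IsPrimitiveRoot ζ ℓ) (hℓ : ℓ ≠ 0) {σ : Equiv.Perm α} {w : α}
    (hw : minimalPeriod σ w = ℓ) (a b : ℤ) : ζ ^ a = ζ ^ b ↔ (σ ^ a) w = (σ ^ b) w := by
  have hζ0 : ζ ≠ 0 := hζ.ne_zero hℓ
  calc ζ ^ a = ζ ^ b ↔ (ℓ : ℤ) ∣ -b + a := by
        rw [← div_eq_one_iff_eq (zpow_ne_zero b hζ0), ← zpow_sub₀ hζ0, hζ.zpow_eq_one_iff_dvd,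
          neg_add_eq_sub]
    _ ↔ (σ ^ (-b + a)) • w = w := by
        rw [← hw]; exact (MulAction.zpow_smul_eq_iff_minimalPeriod_dvd (a := σ)).symm
    _ ↔ (σ ^ a) w = (σ ^ b) w := by rw [zpow_add, mul_smul, zpow_neg, inv_smul_eq_iff]; rfl

theorem Equiv.Perm.exists_apply_eq_mul {α : Type*} [Countable α] (σ : Equiv.Perm α) {ζ : ℂ}
    {ℓ : ℕ} (hζ : IsPrimitiveRoot ζ ℓ) (hℓ : ℓ ≠ 0)
    (hper : ∀ i, σ i ≠ i → minimalPeriod σ i = ℓ) :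
    ∃ z : α → ℂ, (∀ i, z (σ i) = ζ * z i) ∧ (∀ i, z i = 0 ↔ σ i = i) ∧
      Set.InjOn z {i | σ i ≠ i} := by
  classical
  obtain ⟨c, hc⟩ := Countable.exists_injective_nat α
  let r (i : α) : α := (Quotient.mk (SameCycle.setoid σ) i).out
  have hr (i : α) : σ.SameCycle (r i) i := Quotient.mk_out (s := SameCycle.setoid σ) i
  have hrσ (i : α) : r (σ i) = r i :=
    congrArg Quotient.out (Quotient.sound (sameCycle_apply_left.2 (SameCycle.refl σ i)))
  have hphase (i : α) (hi : σ i ≠ i) (a b : ℤ) :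
      ζ ^ a = ζ ^ b ↔ (σ ^ a) (r i) = (σ ^ b) (r i) :=
    hζ.zpow_eq_zpow_iff_zpow_apply_eq hℓ (hper _ fun h ↦ hi ((hr i).apply_eq_self_iff.1 h)) a b
  choose k hk using hr
  have hζ0 : ζ ≠ 0 := hζ.ne_zero hℓ
  refine ⟨fun i ↦ if σ i = i then 0 else ((c (r i) : ℂ) + 1) * ζ ^ k i, fun i ↦ ?_, fun i ↦ ?_,
    fun i hi j hj h ↦ ?_⟩
  · by_cases hi : σ i = i
    · simp [hi]
    have hσi : σ (σ i) ≠ σ i := fun h ↦ hi (σ.injective h)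
    have hstep : ζ ^ k (σ i) = ζ ^ (1 + k i) := by
      rw [hphase i hi, zpow_one_add, Equiv.Perm.mul_apply, hk, ← hrσ, hk]
    simp only [if_neg hi, if_neg hσi, hrσ, hstep, zpow_one_add₀ hζ0]
    ring
  · by_cases hi : σ i = i
    · simp [hi]
    simp only [hi, iff_false]
    exact mul_ne_zero (Nat.cast_add_one_ne_zero _) (zpow_ne_zero _ hζ0)
  · simp only [if_neg (show σ i ≠ i from hi), if_neg (show σ j ≠ j from hj)] at h
    have hrij : r i = r j := by
      have := congrArg norm h
      simp only [norm_mul, norm_zpow, hζ.norm'_eq_one hℓ, one_zpow, mul_one, ← Nat.cast_add_one,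
        Complex.norm_natCast, Nat.cast_inj] at this
      exact hc (Nat.succ_injective this)
    rw [hrij] at h
    have := (hphase i hi _ _).1 (mul_left_cancel₀ (Nat.cast_add_one_ne_zero _) h)
    rwa [hk, hrij, hk] at this

lemma Set.exists_subset_subsingleton_diff_subsingleton {α : Type*} {s : Set α}
    (hs : s.encard ≤ 2) : ∃ t ⊆ s, t.Subsingleton ∧ (s \ t).Subsingleton := by
  rcases s.eq_empty_or_nonempty with rfl | ⟨a, ha⟩
  · exact ⟨∅, empty_subset _, subsingleton_empty, by simp⟩
  refine ⟨{a}, singleton_subset_iff.2 ha, subsingleton_singleton, ?_⟩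
  rw [← encard_le_one_iff_subsingleton, encard_sdiff_singleton_of_mem ha, tsub_le_iff_right]
  exact hs

open Projectivization Matrix.GeneralLinearGroup

theorem Equiv.Perm.exists_injective_dilation_smul {α : Type*} [Countable α] (σ : Equiv.Perm α)
    {ζ : ℂ} {ℓ : ℕ} (hζ : IsPrimitiveRoot ζ ℓ) (hℓ : ℓ ≠ 0)
    (hper : ∀ i, σ i ≠ i → minimalPeriod σ i = ℓ) (hfix : {i | σ i = i}.encard ≤ 2) :
    ∃ x : α → ℙ ℂ (Fin 2 → ℂ), Injective x ∧ ∀ i, dilation ζ (hζ.ne_zero hℓ) • x i = x (σ i) := by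
  classical
  obtain ⟨z, hzσ, hz0, hzinj⟩ := σ.exists_apply_eq_mul hζ hℓ hper
  obtain ⟨S, hSfix, hS, hfixS⟩ := Set.exists_subset_subsingleton_diff_subsingleton hfix
  refine ⟨fun i ↦ if i ∈ S then infinity else ofAffine (z i), fun i j hij ↦ ?_, fun i ↦ ?_⟩
  · by_cases hi : i ∈ S <;> by_cases hj : j ∈ S <;> simp only [hi, hj, if_true, if_false] at hij
    · exact hS hi hj
    · exact absurd hij.symm (ofAffine_ne_infinity _)
    · exact absurd hij (ofAffine_ne_infinity _)
    have hz := ofAffine_injective hij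
    by_cases hfi : σ i = i
    · exact hfixS ⟨hfi, hi⟩ ⟨(hz0 j).1 (hz ▸ (hz0 i).2 hfi), hj⟩
    · exact hzinj hfi (fun hfj ↦ hfi ((hz0 i).1 (hz ▸ (hz0 j).2 hfj))) hz
  · by_cases hi : i ∈ S
    · have hσi : σ i = i := hSfix hi
      simp only [hi, hσi, if_true, dilation_smul_infinity]
    · have hσi : σ i ∉ S := fun h ↦ hi (σ.injective (hSfix h) ▸ h)
      simp only [hi, hσi, if_false, dilation_smul_ofAffine, hzσ]

theorem stmt4_general (n : ℕ) (σ : Equiv.Perm (Fin n)) (hσ : σ ≠ 1) :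
    (∃ (φ : Equiv.Perm (Projectivization ℂ (Fin 2 → ℂ)))
       (g : Matrix.GeneralLinearGroup (Fin 2) ℂ)
       (x : Fin n → Projectivization ℂ (Fin 2 → ℂ)),
        -- `φ` is an element of `PGL₂(ℂ)` (a Möbius transformation induced by a matrix `g`) …
        (∀ (v : Fin 2 → ℂ) (hv : v ≠ 0),
          ∃ hv' : Matrix.mulVec (g : Matrix (Fin 2) (Fin 2) ℂ) v ≠ 0,
            φ (Projectivization.mk ℂ v hv)
              = Projectivization.mk ℂ (Matrix.mulVec (g : Matrix (Fin 2) (Fin 2) ℂ) v) hv') ∧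
        -- … of finite order, and `x` is injective with `φ (x i) = x (σ i)` for all `i`
        IsOfFinOrder φ ∧ Function.Injective x ∧ ∀ i, φ (x i) = x (σ i))
    ↔ -- `σ` is balanced: all nontrivial cycles have the same length `ℓ ≥ 2`
      -- and `σ` has at most two fixed points
      ((∃ ℓ : ℕ, 2 ≤ ℓ ∧ ∀ i : Fin n, σ i ≠ i →
          Set.ncard {j : Fin n | ∃ k : ℤ, (σ ^ k) i = j} = ℓ) ∧
        Set.ncard {i : Fin n | σ i = i} ≤ 2) := by
  have hV : Module.finrank ℂ (Fin 2 → ℂ) = 2 := by simp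
  constructor
  · rintro ⟨φ, g, x, hg, hfin, hx, hσx⟩
    obtain rfl := (eq_toPerm_iff_forall_apply_mk φ g).2 hg
    have hmoved (i : Fin n) (hi : σ i ≠ i) : g • x i ≠ x i :=
      fun h ↦ hi (hx ((hσx i).symm.trans h))
    obtain ⟨i₀, hi₀⟩ : ∃ i, σ i ≠ i := not_forall.1 fun h ↦ hσ (Equiv.ext h)
    set φ : Equiv.Perm (ℙ ℂ (Fin 2 → ℂ)) := MulAction.toPerm g
    have hφ : φ ≠ 1 := fun h ↦ hmoved i₀ hi₀ (Equiv.ext_iff.1 h (x i₀))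
    refine ⟨⟨orderOf φ, ?_, fun i hi ↦ ?_⟩, ?_⟩
    · have := hfin.orderOf_pos
      have := orderOf_eq_one_iff.not.2 hφ
      omega
    · calc _ = minimalPeriod σ i := σ.ncard_setOf_sameCycle i
        _ = minimalPeriod φ (x i) :=
          (Semiconj.minimalPeriod_eq (fun i ↦ (hσx i).symm) hx i).symm
        _ = _ := minimalPeriod_toPerm_eq_orderOf hV (hmoved i hi)
    · have hfix : {i | σ i = i}.encard ≤ 2 :=
        (Set.encard_le_encard_of_injOn (fun i (hi : σ i = i) ↦ (hσx i).trans (congrArg x hi))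
          hx.injOn).trans (encard_fixedBy_le_two hV (hmoved i₀ hi₀))
      exact (Set.encard_le_coe_iff_finite_ncard_le.1 hfix).2
  · rintro ⟨⟨ℓ, hℓ, hcyc⟩, hfix⟩
    have hℓ0 : ℓ ≠ 0 := by omega
    have hζ := Complex.isPrimitiveRoot_exp ℓ hℓ0
    obtain ⟨x, hx, hσx⟩ := σ.exists_injective_dilation_smul hζ hℓ0
      (fun i hi ↦ (σ.ncard_setOf_sameCycle i).symm.trans (hcyc i hi))
      (Set.encard_le_coe_iff_finite_ncard_le.2 ⟨Set.toFinite _, hfix⟩)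
    refine ⟨MulAction.toPerm (dilation _ (hζ.ne_zero hℓ0)), _, x,
      (eq_toPerm_iff_forall_apply_mk _ _).1 rfl, ?_, hx, hσx⟩
    exact (MulAction.toPermHom _ _).isOfFinOrder (isOfFinOrder_dilation _ (hζ.isOfFinOrder hℓ0))

theorem stmt4 (n : ℕ) (hn : 3 ≤ n) (σ : Equiv.Perm (Fin n)) (hσ : σ ≠ 1) :
    (∃ (φ : Equiv.Perm (Projectivization ℂ (Fin 2 → ℂ)))
       (g : Matrix.GeneralLinearGroup (Fin 2) ℂ)
       (x : Fin n → Projectivization ℂ (Fin 2 → ℂ)),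
        -- `φ` is an element of `PGL₂(ℂ)` (a Möbius transformation induced by a matrix `g`) …
        (∀ (v : Fin 2 → ℂ) (hv : v ≠ 0),
          ∃ hv' : Matrix.mulVec (g : Matrix (Fin 2) (Fin 2) ℂ) v ≠ 0,
            φ (Projectivization.mk ℂ v hv)
              = Projectivization.mk ℂ (Matrix.mulVec (g : Matrix (Fin 2) (Fin 2) ℂ) v) hv') ∧
        -- … of finite order, and `x` is injective with `φ (x i) = x (σ i)` for all `i`
        IsOfFinOrder φ ∧ Function.Injective x ∧ ∀ i, φ (x i) = x (σ i))
    ↔ -- `σ` is balanced: all nontrivial cycles have the same length `ℓ ≥ 2`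
      -- and `σ` has at most two fixed points
      ((∃ ℓ : ℕ, 2 ≤ ℓ ∧ ∀ i : Fin n, σ i ≠ i →
          Set.ncard {j : Fin n | ∃ k : ℤ, (σ ^ k) i = j} = ℓ) ∧
        Set.ncard {i : Fin n | σ i = i} ≤ 2) :=
  stmt4_general n σ hσ
end

section
/- Let n ≥ 5 and let I ⊆ ZMod n be a subset with 2 ≤ |I| ≤ n-2 whose induced subgraph in the cycle graph has exactly two connected components. Write I = I₁ ⊔ I₂ and Iᶜ = J₁ ⊔ J₂ as disjoint unions of arcs. Then for every subset K ⊆ ZMod n with 2 ≤ |K| ≤ n-2 whose induced subgraph has at least two connected components, the combinatorial pairing F(I₁,I₂,J₁,J₂)·D_K equals 1 if K = I or K = Iᶜ, and 0 otherwise. -/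
/-- An *arc* in `ZMod n` is a nonempty set of the form `{a, a+1, …, a+k-1}`
(equivalently, a nonempty subset inducing a connected subgraph of the cycle graph). -/
def IsArc {n : ℕ} (S : Finset (ZMod n)) : Prop :=
  ∃ (a : ZMod n) (k : ℕ), 1 ≤ k ∧
    S = Finset.image (fun i : ℕ => a + (i : ZMod n)) (Finset.range k)

/-- The combinatorial intersection pairing `F(A₁,A₂,A₃,A₄) · D_K`. -/
def pairF {n : ℕ} [NeZero n] (A₁ A₂ A₃ A₄ K : Finset (ZMod n)) : ℤ :=
  if (K = A₁ ∪ A₂ ∧ Kᶜ = A₃ ∪ A₄) ∨ (K = A₁ ∪ A₃ ∧ Kᶜ = A₂ ∪ A₄) ∨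
     (K = A₁ ∪ A₄ ∧ Kᶜ = A₂ ∪ A₃) ∨ (K = A₂ ∪ A₃ ∧ Kᶜ = A₁ ∪ A₄) ∨
     (K = A₂ ∪ A₄ ∧ Kᶜ = A₁ ∪ A₃) ∨ (K = A₃ ∪ A₄ ∧ Kᶜ = A₁ ∪ A₂) then 1
  else if (K = A₁ ∧ 2 ≤ A₁.card) ∨ (K = A₂ ∧ 2 ≤ A₂.card) ∨
          (K = A₃ ∧ 2 ≤ A₃.card) ∨ (K = A₄ ∧ 2 ≤ A₄.card) ∨
          (Kᶜ = A₁ ∧ 2 ≤ A₁.card) ∨ (Kᶜ = A₂ ∧ 2 ≤ A₂.card) ∨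
          (Kᶜ = A₃ ∧ 2 ≤ A₃.card) ∨ (Kᶜ = A₄ ∧ 2 ≤ A₄.card) then -1
  else 0

/-!
A nonempty subset of the cycle with at most one exit (an element whose successor lies
outside it) induces a connected subgraph: walking forward from any element one stays inside
until the exit.  Arcs and complements of arcs have at most one exit, and so does the union of
two disjoint arcs of which the first runs into the second.  Hence a disconnected `K` is none of
`I₁, I₂, J₁, J₂` or their complements, and no mixed union `Iᵢ ∪ Jⱼ` either: since `I₁` and `I₂`
do not touch, if `Jⱼ` neither followed nor preceded `Iᵢ`, both neighbours of `Iᵢ` would lie in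
the other `J`-arc, and `Iᵢ` together with that arc would be closed under successor, hence
everything.  Only `K = I` and `K = Iᶜ` remain.
-/

open Finset

variable {n : ℕ}

section Cycle

variable [NeZero n]

theorem ZMod.forall_of_add_one {P : ZMod n → Prop} (a : ZMod n) (ha : P a)
    (hP : ∀ x, P x → P (x + 1)) (x : ZMod n) : P x := by
  have key : ∀ m : ℕ, P (a + m) := by
    intro m
    induction m with
    | zero => simpa using ha
    | succ m ih => simpa [add_assoc] using hP _ ih
  simpa using key (x - a).val

theorem ZMod.forall_of_add_one_imp {P : ZMod n → Prop} (a : ZMod n) (ha : P a)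
    (hP : ∀ x, P (x + 1) → P x) (x : ZMod n) : P x := by
  simpa using ZMod.forall_of_add_one (P := fun y => P (-y)) (-a) (by simpa using ha)
    (fun y hy => hP _ (by simpa using hy)) (-x)

theorem Finset.eq_univ_of_forall_add_one_mem {S : Finset (ZMod n)} (hS : S.Nonempty)
    (h : ∀ x ∈ S, x + 1 ∈ S) : S = univ := by
  obtain ⟨a, ha⟩ := hS
  exact eq_univ_of_forall (ZMod.forall_of_add_one a ha h)

theorem Finset.exists_mem_add_one_notMem {S : Finset (ZMod n)} (hS : S.Nonempty)
    (hS' : S ≠ univ) : ∃ x ∈ S, x + 1 ∉ S := by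
  by_contra! h
  exact hS' (eq_univ_of_forall_add_one_mem hS h)

end Cycle

def exits (S : Finset (ZMod n)) : Set (ZMod n) := {x | x ∈ S ∧ x + 1 ∉ S}

theorem cycleGraph_induce_reachable_add_one {S : Set (ZMod n)} {x : ZMod n} (hx : x ∈ S)
    (hx1 : x + 1 ∈ S) : ((cycleGraph n).induce S).Reachable ⟨x, hx⟩ ⟨x + 1, hx1⟩ := by
  by_cases h : x = x + 1
  · exact (Subtype.ext h : (⟨x, hx⟩ : S) = ⟨x + 1, hx1⟩) ▸ SimpleGraph.Reachable.refl _
  · exact SimpleGraph.Adj.reachable (by simp [cycleGraph, SimpleGraph.fromRel_adj, h])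

theorem cycleGraph_induce_connected_of_exits_subsingleton [NeZero n] {S : Finset (ZMod n)}
    (hS : S.Nonempty) (h : (exits S).Subsingleton) :
    ((cycleGraph n).induce (S : Set (ZMod n))).Connected := by
  obtain ⟨c, hc, hexit⟩ : ∃ c ∈ S, ∀ x ∈ S, x + 1 ∉ S → x = c := by
    rcases h.eq_empty_or_singleton with hempty | ⟨c, hc⟩
    · obtain ⟨c, hcS⟩ := hS
      exact ⟨c, hcS, fun x hx hx1 => (Set.eq_empty_iff_forall_notMem.mp hempty x ⟨hx, hx1⟩).elim⟩
    · have hcmem : c ∈ exits S := hc ▸ rfl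
      exact ⟨c, hcmem.1, fun x hx hx1 => h ⟨hx, hx1⟩ hcmem⟩
  have hreach : ∀ x, ∀ hx : x ∈ S,
      ((cycleGraph n).induce (S : Set (ZMod n))).Reachable ⟨x, hx⟩ ⟨c, hc⟩ := by
    refine ZMod.forall_of_add_one_imp c (fun _ => .refl _) fun x ih hx => ?_
    by_cases hx1 : x + 1 ∈ S
    · exact (cycleGraph_induce_reachable_add_one hx hx1).trans (ih hx1)
    · obtain rfl := hexit x hx hx1
      rfl
  rw [SimpleGraph.connected_iff]
  exact ⟨fun x y => (hreach x x.2).trans (hreach y y.2).symm, ⟨⟨c, hc⟩⟩⟩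

theorem exits_union_subsingleton {A C : Finset (ZMod n)} (hA : (exits A).Subsingleton)
    (hC : (exits C).Subsingleton) (hAC : Disjoint A C) {x : ZMod n} (hx : x ∈ A)
    (hx1 : x + 1 ∈ C) : (exits (A ∪ C)).Subsingleton := by
  refine hC.anti fun y ⟨hy, hy1⟩ => ?_
  rw [mem_union, not_or] at hy1
  rcases mem_union.mp hy with hyA | hyC
  · have hxy : y = x := hA ⟨hyA, hy1.1⟩ ⟨hx, disjoint_right.mp hAC hx1⟩
    exact absurd (hxy ▸ hx1) hy1.2
  · exact ⟨hyC, hy1.2⟩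

theorem SimpleGraph.not_connected_of_two_le_card_connectedComponent {V : Type*}
    {G : SimpleGraph V} (h : 2 ≤ Nat.card G.ConnectedComponent) : ¬ G.Connected := fun hG => by
  have := hG.preconnected.subsingleton_connectedComponent
  have := Finite.card_le_one_iff_subsingleton.mpr ‹Subsingleton G.ConnectedComponent›
  omega

namespace IsArc

variable {S : Finset (ZMod n)}

theorem nonempty (hS : IsArc S) : S.Nonempty := by
  obtain ⟨a, k, hk, rfl⟩ := hS
  exact (nonempty_range_iff.mpr (by omega)).image _

theorem exits_subsingleton (hS : IsArc S) : (exits S).Subsingleton := by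
  obtain ⟨a, k, -, rfl⟩ := hS
  refine (Set.subsingleton_singleton (a := a + ((k - 1 : ℕ) : ZMod n))).anti ?_
  rintro x ⟨hx, hx1⟩
  obtain ⟨i, hi, rfl⟩ := mem_image.mp hx
  have hlast : ¬ i + 1 < k := fun h =>
    hx1 (mem_image.mpr ⟨i + 1, mem_range.mpr h, by push_cast; ring⟩)
  rw [Set.mem_singleton_iff, show i = k - 1 by rw [mem_range] at hi; omega]

theorem exits_compl_subsingleton [NeZero n] (hS : IsArc S) : (exits Sᶜ).Subsingleton := by
  obtain ⟨a, k, -, rfl⟩ := hS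
  refine (Set.subsingleton_singleton (a := a - 1)).anti ?_
  rintro x ⟨hx, hx1⟩
  rw [mem_compl, not_not] at hx1
  rw [mem_compl] at hx
  obtain ⟨i, hi, hxi⟩ := mem_image.mp hx1
  rcases i with _ | i
  · rw [Set.mem_singleton_iff, eq_sub_iff_add_eq, ← hxi]
    simp
  · refine absurd (mem_image.mpr ⟨i, mem_range.mpr (by rw [mem_range] at hi; omega), ?_⟩) hx
    rw [← add_right_cancel_iff (a := (1 : ZMod n)), ← hxi]
    push_cast
    ring

theorem induce_connected [NeZero n] (hS : IsArc S) :
    ((cycleGraph n).induce (S : Set (ZMod n))).Connected :=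
  cycleGraph_induce_connected_of_exits_subsingleton hS.nonempty hS.exits_subsingleton

theorem induce_compl_connected [NeZero n] (hS : IsArc S) (hS' : Sᶜ.Nonempty) :
    ((cycleGraph n).induce ((Sᶜ : Finset (ZMod n)) : Set (ZMod n))).Connected :=
  cycleGraph_induce_connected_of_exits_subsingleton hS' hS.exits_compl_subsingleton

theorem induce_union_connected [NeZero n] {T : Finset (ZMod n)} (hS : IsArc S) (hT : IsArc T)
    (hST : Disjoint S T) {x : ZMod n} (hx : x ∈ S) (hx1 : x + 1 ∈ T) :
    ((cycleGraph n).induce ((S ∪ T : Finset (ZMod n)) : Set (ZMod n))).Connected :=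
  cycleGraph_induce_connected_of_exits_subsingleton (hS.nonempty.mono subset_union_left)
    (exits_union_subsingleton hS.exits_subsingleton hT.exits_subsingleton hST hx hx1)

end IsArc

section Partition

variable [NeZero n] {A B C D : Finset (ZMod n)}

theorem exists_add_one_mem_of_partition (hA : (exits A).Subsingleton)
    (hD : (exits D).Subsingleton) (hAne : A.Nonempty) (hBne : B.Nonempty)
    (hAB : Disjoint A B) (hcompl : C ∪ D = (A ∪ B)ᶜ)
    (hAB_succ : ∀ x ∈ A, x + 1 ∉ B) (hBA_succ : ∀ x ∈ B, x + 1 ∉ A) :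
    ∃ x, x ∈ A ∧ x + 1 ∈ C ∨ x ∈ C ∧ x + 1 ∈ A := by
  by_contra! hAC
  have hmemD : ∀ x, x ∉ A → x ∉ B → x ∉ C → x ∈ D := fun x hxA hxB hxC => by
    have : x ∈ C ∪ D := by rw [hcompl, mem_compl, mem_union]; tauto
    exact (mem_union.mp this).resolve_left hxC
  have hDAB : ∀ x ∈ D, x ∉ A ∧ x ∉ B := fun x hx => by
    have : x ∈ (A ∪ B)ᶜ := hcompl ▸ mem_union_right C hx
    simpa [not_or] using this
  obtain ⟨e, heA, he1A⟩ := exists_mem_add_one_notMem hAne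
    fun h => by obtain ⟨b, hb⟩ := hBne; exact disjoint_left.mp hAB (h ▸ mem_univ b) hb
  obtain ⟨s, hsA, hs1A⟩ : ∃ s ∉ A, s + 1 ∈ A := by
    obtain ⟨b, hb⟩ := hBne
    simpa using exists_mem_add_one_notMem (S := Aᶜ) ⟨b, mem_compl.mpr (disjoint_right.mp hAB hb)⟩
      (by simpa [compl_eq_univ_iff] using hAne.ne_empty)
  have he1D : e + 1 ∈ D := hmemD _ he1A (hAB_succ e heA) ((hAC e).1 heA)
  have hsD : s ∈ D :=
    hmemD s hsA (fun hsB => hBA_succ s hsB hs1A) fun hsC => (hAC s).2 hsC hs1A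
  have hADuniv : A ∪ D = univ := by
    refine eq_univ_of_forall_add_one_mem ⟨e, mem_union_left D heA⟩ fun x hx => ?_
    rcases mem_union.mp hx with hxA | hxD
    · by_cases hx1 : x + 1 ∈ A
      · exact mem_union_left D hx1
      · rw [hA ⟨hxA, hx1⟩ ⟨heA, he1A⟩]
        exact mem_union_right A he1D
    · by_cases hx1 : x + 1 ∈ D
      · exact mem_union_right A hx1
      · rw [hD ⟨hxD, hx1⟩ ⟨hsD, fun h => (hDAB _ h).1 hs1A⟩]
        exact mem_union_left D hs1A
  obtain ⟨b, hb⟩ := hBne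
  rcases mem_union.mp (hADuniv ▸ mem_univ b) with hbA | hbD
  exacts [disjoint_left.mp hAB hbA hb, (hDAB b hbD).2 hb]

theorem induce_union_connected_of_isArc_partition (hA : IsArc A) (hB : IsArc B)
    (hC : IsArc C) (hD : IsArc D) (hAB : Disjoint A B) (hcompl : C ∪ D = (A ∪ B)ᶜ)
    (hsep : ¬ ((cycleGraph n).induce ((A ∪ B : Finset (ZMod n)) : Set (ZMod n))).Connected) :
    ((cycleGraph n).induce ((A ∪ C : Finset (ZMod n)) : Set (ZMod n))).Connected := by
  have hAC : Disjoint A C :=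
    disjoint_left.mpr fun x hxA hxC => by
      have : x ∈ (A ∪ B)ᶜ := hcompl ▸ mem_union_left D hxC
      exact mem_compl.mp this (mem_union_left B hxA)
  have hAB_succ : ∀ x ∈ A, x + 1 ∉ B := fun x hx hx1 =>
    hsep (hA.induce_union_connected hB hAB hx hx1)
  have hBA_succ : ∀ x ∈ B, x + 1 ∉ A := fun x hx hx1 =>
    hsep (union_comm B A ▸ hB.induce_union_connected hA hAB.symm hx hx1)
  obtain ⟨x, ⟨hx, hx1⟩ | ⟨hx, hx1⟩⟩ := exists_add_one_mem_of_partition hA.exits_subsingleton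
    hD.exits_subsingleton hA.nonempty hB.nonempty hAB hcompl hAB_succ hBA_succ
  · exact hA.induce_union_connected hC hAC hx hx1
  · exact union_comm C A ▸ hC.induce_union_connected hA hAC.symm hx hx1

end Partition

theorem stmt8_general (n : ℕ) [NeZero n] (I I₁ I₂ J₁ J₂ : Finset (ZMod n))
    -- the induced subgraph on `I` has exactly two connected components
    (hIcomp : Nat.card ((cycleGraph n).induce (I : Set (ZMod n))).ConnectedComponent = 2)
    -- `I = I₁ ⊔ I₂` and `Iᶜ = J₁ ⊔ J₂` with all four pieces arcs
    (hIun : I₁ ∪ I₂ = I) (hJun : J₁ ∪ J₂ = Iᶜ)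
    (hd1 : Disjoint I₁ I₂)
    (ha1 : IsArc I₁) (ha2 : IsArc I₂) (ha3 : IsArc J₁) (ha4 : IsArc J₂) :
    ∀ K : Finset (ZMod n), 2 ≤ K.card → K.card ≤ n - 2 →
      2 ≤ Nat.card ((cycleGraph n).induce (K : Set (ZMod n))).ConnectedComponent →
      pairF I₁ I₂ J₁ J₂ K = if K = I ∨ K = Iᶜ then 1 else 0 := by
  intro K hK _ hKcomp
  have hKdisc := SimpleGraph.not_connected_of_two_le_card_connectedComponent hKcomp
  have hIdisc := SimpleGraph.not_connected_of_two_le_card_connectedComponent hIcomp.ge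
  by_cases hKI : K = I ∨ K = Iᶜ
  · rw [if_pos hKI, pairF, if_pos]
    rcases hKI with rfl | rfl
    · exact Or.inl ⟨hIun.symm, hJun.symm⟩
    · exact .inr <| .inr <| .inr <| .inr <| .inr ⟨hJun.symm, by rw [compl_compl, hIun]⟩
  have hK_ne : ∀ S, IsArc S → K ≠ S := fun S hS hKS => hKdisc (hKS ▸ hS.induce_connected)
  have hKc_ne : ∀ S, IsArc S → Kᶜ ≠ S := fun S hS hKS => hKdisc <| by
    obtain rfl : K = Sᶜ := by rw [← hKS, compl_compl]
    exact hS.induce_compl_connected (card_pos.mp (by omega))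
  have hK_ne_mixed : ∀ {A B C D}, IsArc A → IsArc B → IsArc C → IsArc D → Disjoint A B →
      A ∪ B = I → C ∪ D = Iᶜ → K ≠ A ∪ C := fun hA hB hC hD hAB hABI hCDI hK =>
    hKdisc (hK ▸ induce_union_connected_of_isArc_partition hA hB hC hD hAB (hABI ▸ hCDI)
      (hABI ▸ hIdisc))
  rw [if_neg hKI, pairF, if_neg, if_neg]
  · rintro (⟨h, -⟩ | ⟨h, -⟩ | ⟨h, -⟩ | ⟨h, -⟩ | ⟨h, -⟩ | ⟨h, -⟩ | ⟨h, -⟩ | ⟨h, -⟩)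
    exacts [hK_ne _ ha1 h, hK_ne _ ha2 h, hK_ne _ ha3 h, hK_ne _ ha4 h,
      hKc_ne _ ha1 h, hKc_ne _ ha2 h, hKc_ne _ ha3 h, hKc_ne _ ha4 h]
  · rintro (⟨h, -⟩ | ⟨h, -⟩ | ⟨h, -⟩ | ⟨h, -⟩ | ⟨h, -⟩ | ⟨h, -⟩)
    · exact hKI (.inl (h.trans hIun))
    · exact hK_ne_mixed ha1 ha2 ha3 ha4 hd1 hIun hJun h
    · exact hK_ne_mixed ha1 ha2 ha4 ha3 hd1 hIun (union_comm J₂ J₁ ▸ hJun) h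
    · exact hK_ne_mixed ha2 ha1 ha3 ha4 hd1.symm (union_comm I₂ I₁ ▸ hIun) hJun h
    · exact hK_ne_mixed ha2 ha1 ha4 ha3 hd1.symm (union_comm I₂ I₁ ▸ hIun)
        (union_comm J₂ J₁ ▸ hJun) h
    · exact hKI (.inr (h.trans hJun))

theorem stmt8 (n : ℕ) [NeZero n] (hn : 5 ≤ n) (I I₁ I₂ J₁ J₂ : Finset (ZMod n))
    (hIc1 : 2 ≤ I.card) (hIc2 : I.card ≤ n - 2)
    -- the induced subgraph on `I` has exactly two connected components
    (hIcomp : Nat.card ((cycleGraph n).induce (I : Set (ZMod n))).ConnectedComponent = 2)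
    -- `I = I₁ ⊔ I₂` and `Iᶜ = J₁ ⊔ J₂` with all four pieces arcs
    (hIun : I₁ ∪ I₂ = I) (hJun : J₁ ∪ J₂ = Iᶜ)
    (hd1 : Disjoint I₁ I₂) (hd2 : Disjoint J₁ J₂)
    (ha1 : IsArc I₁) (ha2 : IsArc I₂) (ha3 : IsArc J₁) (ha4 : IsArc J₂) :
    ∀ K : Finset (ZMod n), 2 ≤ K.card → K.card ≤ n - 2 →
      2 ≤ Nat.card ((cycleGraph n).induce (K : Set (ZMod n))).ConnectedComponent →
      pairF I₁ I₂ J₁ J₂ K = if K = I ∨ K = Iᶜ then 1 else 0 :=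
  stmt8_general n I I₁ I₂ J₁ J₂ hIcomp hIun hJun hd1 ha1 ha2 ha3 ha4
end

section
/- Let I = {I₁,I₂,I₃,I₄} and J = {J₁,J₂,J₃,J₄} be two unordered partitions of Fin n into four nonempty parts. There exists a partition of Fin n into five nonempty parts P₁,…,P₅ such that both I and J occur among the four partitions {P₁,P₂,P₃,P₄∪P₅}, {P₁∪P₂,P₃,P₄,P₅}, {P₁,P₄,P₃,P₂∪P₅}, {P₁∪P₄,P₃,P₂,P₅} appearing in the associated Keel relation, if and only if the common refinement of I and J (the collection of nonempty sets of the form I_i ∩ J_j) has exactly 5 elements. -/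
/-!
The common refinement `R` of `I` and `J` refines both. A four-block partition refined by a
five-block one arises from it by merging a single pair of blocks, since the numbers of blocks of
`R` inside the four blocks are positive and sum to five. So `|R| = 5` means that `I` and `J` are
`R` with one pair `e`, resp. `f`, of blocks merged, and `e ≠ f` because `I ≠ J`. Conversely, the
four partitions of the Keel relation are `P` with the pair `{P₄, P₅}`, `{P₁, P₂}`, `{P₂, P₅}` or
`{P₁, P₄}` merged, and since two different pairs share at most one block, merging either of them
leaves `P` as the common refinement. What links the two directions is that these four pairs are
the edges of the 4-cycle `P₁ P₂ P₅ P₄`, and any two distinct pairs of a five-element set are two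
edges of such a cycle: adjacent ones if they meet, opposite ones if not.
-/

open Finset

variable {α : Type*} [DecidableEq α]

def commonRefinement (I J : Finset (Finset α)) : Finset (Finset α) :=
  ((I ×ˢ J).image fun p => p.1 ∩ p.2).filter Finset.Nonempty

section CommonRefinement

variable {I J : Finset (Finset α)} {S : Finset α}

theorem mem_commonRefinement :
    S ∈ commonRefinement I J ↔ S.Nonempty ∧ ∃ A ∈ I, ∃ B ∈ J, S = A ∩ B := by
  simp only [commonRefinement, mem_filter, mem_image, mem_product, Prod.exists]
  constructor
  · rintro ⟨⟨A, B, ⟨hA, hB⟩, rfl⟩, hS⟩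
    exact ⟨hS, A, hA, B, hB, rfl⟩
  · rintro ⟨hS, A, hA, B, hB, rfl⟩
    exact ⟨⟨A, B, ⟨hA, hB⟩, rfl⟩, hS⟩

theorem coe_commonRefinement :
    (commonRefinement I J : Set (Finset α)) =
      {S | S.Nonempty ∧ ∃ A ∈ I, ∃ B ∈ J, S = A ∩ B} :=
  Set.ext fun _ => mem_commonRefinement

theorem commonRefinement_comm : commonRefinement I J = commonRefinement J I := by
  ext S
  simp only [mem_commonRefinement]
  constructor <;> rintro ⟨hS, A, hA, B, hB, rfl⟩ <;> exact ⟨hS, B, hB, A, hA, inter_comm _ _⟩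

theorem pairwiseDisjoint_commonRefinement (hI : (I : Set (Finset α)).PairwiseDisjoint id)
    (hJ : (J : Set (Finset α)).PairwiseDisjoint id) :
    (commonRefinement I J : Set (Finset α)).PairwiseDisjoint id := by
  rintro S hS S' hS' hSS'
  obtain ⟨-, A, hA, B, hB, rfl⟩ := mem_commonRefinement.1 hS
  obtain ⟨-, A', hA', B', hB', rfl⟩ := mem_commonRefinement.1 hS'
  by_cases hAA' : A = A'
  · have hBB' : B ≠ B' := by rintro rfl; exact hSS' (by rw [hAA'])
    exact (hJ hB hB' hBB').mono inter_subset_right inter_subset_right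
  · exact (hI hA hA' hAA').mono inter_subset_left inter_subset_left

theorem sup_commonRefinement : (commonRefinement I J).sup id = I.sup id ∩ J.sup id := by
  ext x
  simp only [mem_sup, mem_inter, id, mem_commonRefinement]
  constructor
  · rintro ⟨-, ⟨-, A, hA, B, hB, rfl⟩, hx⟩
    exact ⟨⟨A, hA, (mem_inter.1 hx).1⟩, B, hB, (mem_inter.1 hx).2⟩
  · rintro ⟨⟨A, hA, hxA⟩, B, hB, hxB⟩
    exact ⟨A ∩ B, ⟨⟨x, mem_inter.2 ⟨hxA, hxB⟩⟩, A, hA, B, hB, rfl⟩, mem_inter.2 ⟨hxA, hxB⟩⟩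

theorem exists_superset_of_mem_commonRefinement (hS : S ∈ commonRefinement I J) :
    ∃ A ∈ I, S ⊆ A := by
  obtain ⟨-, A, hA, B, -, rfl⟩ := mem_commonRefinement.1 hS
  exact ⟨A, hA, inter_subset_left⟩

theorem sup_filter_commonRefinement {A : Finset α} (hA : A ∈ I) (hAJ : A ⊆ J.sup id) :
    ((commonRefinement I J).filter (· ⊆ A)).sup id = A := by
  refine Subset.antisymm (Finset.sup_le fun S hS => (mem_filter.1 hS).2) fun x hx => ?_
  obtain ⟨B, hB, hxB⟩ := mem_sup.1 (hAJ hx)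
  have hxAB : x ∈ A ∩ B := mem_inter.2 ⟨hx, hxB⟩
  exact mem_sup.2 ⟨A ∩ B, mem_filter.2
    ⟨mem_commonRefinement.2 ⟨⟨x, hxAB⟩, A, hA, B, hB, rfl⟩, inter_subset_left⟩, hxAB⟩

end CommonRefinement

section DisjointFamily

variable {R : Finset (Finset α)}

theorem sup_inter_sup_of_pairwiseDisjoint (hR : (R : Set (Finset α)).PairwiseDisjoint id)
    {σ τ : Finset (Finset α)} (hσ : σ ⊆ R) (hτ : τ ⊆ R) :
    σ.sup id ∩ τ.sup id = (σ ∩ τ).sup id := by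
  ext x
  simp only [mem_inter, mem_sup, id]
  constructor
  · rintro ⟨⟨Q, hQ, hxQ⟩, Q', hQ', hxQ'⟩
    obtain rfl : Q = Q' := hR.elim_finset (hσ hQ) (hτ hQ') x hxQ hxQ'
    exact ⟨Q, ⟨hQ, hQ'⟩, hxQ⟩
  · rintro ⟨Q, ⟨hQ, hQ'⟩, hxQ⟩
    exact ⟨⟨Q, hQ, hxQ⟩, Q, hQ', hxQ⟩

theorem commonRefinement_image_sup (hR : (R : Set (Finset α)).PairwiseDisjoint id)
    (hne : ∀ Q ∈ R, Q.Nonempty) {F G : Finset (Finset (Finset α))}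
    (hF : ∀ σ ∈ F, σ ⊆ R) (hG : ∀ τ ∈ G, τ ⊆ R)
    (hFcov : ∀ Q ∈ R, ∃ σ ∈ F, Q ∈ σ) (hGcov : ∀ Q ∈ R, ∃ τ ∈ G, Q ∈ τ)
    (hFG : ∀ σ ∈ F, ∀ τ ∈ G, #(σ ∩ τ) ≤ 1) :
    commonRefinement (F.image (·.sup id)) (G.image (·.sup id)) = R := by
  have hmeet : ∀ σ ∈ F, ∀ τ ∈ G, ∀ Q ∈ σ ∩ τ, σ.sup id ∩ τ.sup id = Q := by
    intro σ hσ τ hτ Q hQ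
    rw [sup_inter_sup_of_pairwiseDisjoint hR (hF σ hσ) (hG τ hτ),
      eq_singleton_iff_unique_mem.2 ⟨hQ, fun Q' hQ' => card_le_one.1 (hFG σ hσ τ hτ) Q' hQ' Q hQ⟩,
      sup_singleton, id]
  ext S
  rw [mem_commonRefinement]
  constructor
  · rintro ⟨⟨x, hx⟩, A, hA, B, hB, rfl⟩
    obtain ⟨σ, hσ, rfl⟩ := mem_image.1 hA
    obtain ⟨τ, hτ, rfl⟩ := mem_image.1 hB
    rw [sup_inter_sup_of_pairwiseDisjoint hR (hF σ hσ) (hG τ hτ)] at hx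
    obtain ⟨Q, hQ, -⟩ := mem_sup.1 hx
    rw [hmeet σ hσ τ hτ Q hQ]
    exact hF σ hσ (mem_inter.1 hQ).1
  · intro hS
    obtain ⟨σ, hσ, hSσ⟩ := hFcov S hS
    obtain ⟨τ, hτ, hSτ⟩ := hGcov S hS
    exact ⟨hne S hS, _, mem_image_of_mem _ hσ, _, mem_image_of_mem _ hτ,
      (hmeet σ hσ τ hτ S (mem_inter.2 ⟨hSσ, hSτ⟩)).symm⟩

end DisjointFamily

def mergeBlocks (R e : Finset (Finset α)) : Finset (Finset α) :=
  insert (e.sup id) (R \ e)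

def mergeIndex (R e : Finset (Finset α)) : Finset (Finset (Finset α)) :=
  insert e ((R \ e).image singleton)

section Merge

variable {R e f : Finset (Finset α)}

theorem mergeBlocks_eq_image_sup : mergeBlocks R e = (mergeIndex R e).image (·.sup id) := by
  simp [mergeBlocks, mergeIndex, image_image, Function.comp_def]

theorem subset_of_mem_mergeIndex (he : e ⊆ R) {σ : Finset (Finset α)} (hσ : σ ∈ mergeIndex R e) :
    σ ⊆ R := by
  rcases mem_insert.1 hσ with rfl | hσ
  · exact he
  · obtain ⟨Q, hQ, rfl⟩ := mem_image.1 hσ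
    exact singleton_subset_iff.2 (mem_sdiff.1 hQ).1

theorem exists_mem_mergeIndex {Q : Finset α} (hQ : Q ∈ R) : ∃ σ ∈ mergeIndex R e, Q ∈ σ := by
  by_cases hQe : Q ∈ e
  · exact ⟨e, mem_insert_self _ _, hQe⟩
  · exact ⟨{Q}, mem_insert_of_mem (mem_image_of_mem _ (mem_sdiff.2 ⟨hQ, hQe⟩)),
      mem_singleton_self _⟩

theorem card_inter_le_one_of_mem_mergeIndex (hef : #(e ∩ f) ≤ 1) {σ τ : Finset (Finset α)}
    (hσ : σ ∈ mergeIndex R e) (hτ : τ ∈ mergeIndex R f) : #(σ ∩ τ) ≤ 1 := by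
  simp only [mergeIndex, mem_insert, mem_image] at hσ hτ
  rcases hσ with rfl | ⟨Q, -, rfl⟩
  · rcases hτ with rfl | ⟨Q', -, rfl⟩
    · exact hef
    · exact (card_le_card inter_subset_right).trans (card_singleton _).le
  · exact (card_le_card inter_subset_left).trans (card_singleton _).le

theorem commonRefinement_mergeBlocks (hR : (R : Set (Finset α)).PairwiseDisjoint id)
    (hne : ∀ Q ∈ R, Q.Nonempty) (he : e ⊆ R) (hf : f ⊆ R) (hef : #(e ∩ f) ≤ 1) :
    commonRefinement (mergeBlocks R e) (mergeBlocks R f) = R := by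
  rw [mergeBlocks_eq_image_sup, mergeBlocks_eq_image_sup]
  exact commonRefinement_image_sup hR hne (fun _ => subset_of_mem_mergeIndex he)
    (fun _ => subset_of_mem_mergeIndex hf) (fun _ => exists_mem_mergeIndex)
    (fun _ => exists_mem_mergeIndex) fun _ hσ _ hτ => card_inter_le_one_of_mem_mergeIndex hef hσ hτ

end Merge

theorem exists_eq_two_of_sum_eq_card_add_one {ι : Type*} {s : Finset ι} {f : ι → ℕ}
    (hpos : ∀ i ∈ s, 1 ≤ f i) (hsum : ∑ i ∈ s, f i = #s + 1) :
    ∃ i₀ ∈ s, f i₀ = 2 ∧ ∀ i ∈ s, i ≠ i₀ → f i = 1 := by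
  have hexcess : ∑ i ∈ s, (f i - 1) = 1 := by
    rw [sum_tsub_distrib s hpos, hsum, card_eq_sum_ones]
    omega
  obtain ⟨i₀, hi₀, hne⟩ := exists_ne_zero_of_sum_ne_zero (hexcess.trans_ne one_ne_zero)
  have hle := sum_le_one_iff.1 hexcess.le
  refine ⟨i₀, hi₀, by have := (hle i₀ i₀ hi₀ hi₀ hne hne).2; omega, fun i hi hii₀ => ?_⟩
  by_contra hfi
  exact hii₀ (hle i i₀ hi hi₀ (by have := hpos i hi; omega) hne).1

section Coarsening

variable {R I : Finset (Finset α)}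

theorem sum_card_filter_subset (hne : ∀ Q ∈ R, Q.Nonempty)
    (hI : (I : Set (Finset α)).PairwiseDisjoint id) (hsub : ∀ Q ∈ R, ∃ A ∈ I, Q ⊆ A) :
    ∑ A ∈ I, #(R.filter (· ⊆ A)) = #R := by
  have hdisj : (I : Set (Finset α)).PairwiseDisjoint (fun A => R.filter (· ⊆ A)) :=
    fun A hA A' hA' hAA' => disjoint_left.2 fun Q hQA hQA' => by
      obtain ⟨x, hx⟩ := hne Q (mem_filter.1 hQA).1
      exact hAA' (hI.elim_finset hA hA' x ((mem_filter.1 hQA).2 hx) ((mem_filter.1 hQA').2 hx))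
  rw [← card_biUnion hdisj]
  congr 1
  ext Q
  simp only [mem_biUnion, mem_filter]
  constructor
  · rintro ⟨-, -, hQ, -⟩
    exact hQ
  · intro hQ
    obtain ⟨A, hA, hQA⟩ := hsub Q hQ
    exact ⟨A, hA, hQ, hQA⟩

theorem exists_eq_mergeBlocks (hne : ∀ Q ∈ R, Q.Nonempty)
    (hI : (I : Set (Finset α)).PairwiseDisjoint id) (hInon : ∀ A ∈ I, A.Nonempty)
    (hsub : ∀ Q ∈ R, ∃ A ∈ I, Q ⊆ A) (hsup : ∀ A ∈ I, (R.filter (· ⊆ A)).sup id = A)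
    (hcard : #R = #I + 1) :
    ∃ e ⊆ R, #e = 2 ∧ I = mergeBlocks R e := by
  have hpos : ∀ A ∈ I, 1 ≤ #(R.filter (· ⊆ A)) := fun A hA =>
    one_le_card.2 (nonempty_iff_ne_empty.2 fun h => (hInon A hA).ne_empty (by
      rw [← hsup A hA, h, sup_empty]
      rfl))
  obtain ⟨A₀, hA₀, hA₀two, hone⟩ := exists_eq_two_of_sum_eq_card_add_one hpos
    ((sum_card_filter_subset hne hI hsub).trans hcard)
  refine ⟨R.filter (· ⊆ A₀), filter_subset _ _, hA₀two,
    eq_of_subset_of_card_le (fun A hA => ?_) ?_⟩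
  · rw [mergeBlocks, mem_insert, mem_sdiff]
    by_cases hAA₀ : A = A₀
    · exact Or.inl (hAA₀ ▸ (hsup A₀ hA₀).symm)
    obtain ⟨Q, hQ⟩ := card_eq_one.1 (hone A hA hAA₀)
    have hQR : Q ∈ R := (mem_filter.1 (hQ ▸ mem_singleton_self Q)).1
    obtain rfl : A = Q := by
      rw [← hsup A hA, hQ, sup_singleton]
      rfl
    refine Or.inr ⟨hQR, fun hAA₀' => hAA₀ ?_⟩
    obtain ⟨x, hx⟩ := hInon A hA
    exact hI.elim_finset hA hA₀ x hx ((mem_filter.1 hAA₀').2 hx)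
  · calc #(mergeBlocks R (R.filter (· ⊆ A₀))) ≤ #(R \ R.filter (· ⊆ A₀)) + 1 :=
          card_insert_le _ _
      _ = #I := by
        rw [card_sdiff_of_subset (filter_subset _ _), hA₀two, hcard]
        have := card_pos.2 ⟨A₀, hA₀⟩
        omega

end Coarsening

theorem exists_eq_mergeBlocks_commonRefinement {I J : Finset (Finset α)}
    (hI : (I : Set (Finset α)).PairwiseDisjoint id)
    (hInon : ∀ A ∈ I, A.Nonempty) (hcov : ∀ A ∈ I, A ⊆ J.sup id)
    (hcard : #(commonRefinement I J) = #I + 1) :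
    ∃ e ⊆ commonRefinement I J, #e = 2 ∧ I = mergeBlocks (commonRefinement I J) e :=
  exists_eq_mergeBlocks (fun _ hS => (mem_commonRefinement.1 hS).1) hI hInon
    (fun _ => exists_superset_of_mem_commonRefinement)
    (fun _ hA => sup_filter_commonRefinement hA (hcov _ hA)) hcard

section FiveElements

variable {β : Type*} [DecidableEq β] {R e f : Finset β}

theorem eq_toFinset_of_nodup {l : List β} (hl : l.Nodup) (hlR : ∀ x ∈ l, x ∈ R)
    (hR : #R = l.length) : R = l.toFinset :=
  (eq_of_subset_of_card_le (fun x hx => hlR x (List.mem_toFinset.1 hx))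
    (by rw [List.toFinset_card_of_nodup hl, hR])).symm

theorem card_inter_le_one_of_ne (he2 : #e = 2) (hf2 : #f = 2) (hef : e ≠ f) : #(e ∩ f) ≤ 1 := by
  by_contra! h
  have hinter_e := eq_of_subset_of_card_le inter_subset_left (by omega : #e ≤ #(e ∩ f))
  have hinter_f := eq_of_subset_of_card_le inter_subset_right (by omega : #f ≤ #(e ∩ f))
  exact hef (hinter_e.symm.trans hinter_f)

theorem exists_eq_pair_of_mem {s : β} (hs : s ∈ e) (he2 : #e = 2) : ∃ u, u ≠ s ∧ e = {s, u} := by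
  obtain ⟨u, hu⟩ := card_eq_one.1 (by rw [card_erase_of_mem hs, he2] : #(e.erase s) = 1)
  exact ⟨u, ne_of_mem_erase (hu ▸ mem_singleton_self u), by rw [← insert_erase hs, hu]⟩

def keelPairs (P₁ P₂ P₄ P₅ : β) : Finset (Finset β) :=
  {{P₄, P₅}, {P₁, P₂}, {P₂, P₅}, {P₁, P₄}}

theorem subset_and_card_of_mem_keelPairs {P₁ P₂ P₃ P₄ P₅ : β}
    (h : [P₁, P₂, P₃, P₄, P₅].Nodup) {e : Finset β} (he : e ∈ keelPairs P₁ P₂ P₄ P₅) :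
    e ⊆ [P₁, P₂, P₃, P₄, P₅].toFinset ∧ #e = 2 := by
  simp only [List.nodup_cons, List.mem_cons, List.not_mem_nil, or_false, not_or,
    List.nodup_nil, and_true] at h
  simp only [keelPairs, mem_insert, mem_singleton] at he
  rcases he with rfl | rfl | rfl | rfl <;> constructor <;> simp [insert_subset_iff, *]

theorem exists_keelPairs_of_adjacent (hR : #R = 5) {s u v : β} (hs : s ∈ R) (hu : u ∈ R)
    (hv : v ∈ R) (hus : u ≠ s) (hvs : v ≠ s) (huv : u ≠ v) :
    ∃ P₁ P₂ P₃ P₄ P₅ : β, [P₁, P₂, P₃, P₄, P₅].Nodup ∧ R = [P₁, P₂, P₃, P₄, P₅].toFinset ∧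
      {s, u} ∈ keelPairs P₁ P₂ P₄ P₅ ∧ {s, v} ∈ keelPairs P₁ P₂ P₄ P₅ := by
  have hrest : #(R \ {s, u, v}) = 2 := by
    rw [card_sdiff_of_subset (by simp [insert_subset_iff, *]), hR,
      card_insert_of_notMem (by simp [hus.symm, hvs.symm]),
      card_insert_of_notMem (by simp [huv]), card_singleton]
  obtain ⟨p, q, hpq, hpq_eq⟩ := card_eq_two.1 hrest
  have hp : p ∈ R \ {s, u, v} := hpq_eq ▸ mem_insert_self p {q}
  have hq : q ∈ R \ {s, u, v} := hpq_eq ▸ mem_insert_of_mem (mem_singleton_self q)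
  simp only [mem_sdiff, mem_insert, mem_singleton, not_or] at hp hq
  have hl : [p, v, q, u, s].Nodup := by
    simp only [List.nodup_cons, List.mem_cons, List.not_mem_nil, or_false, not_or, List.nodup_nil,
      and_true]
    grind
  exact ⟨p, v, q, u, s, hl, eq_toFinset_of_nodup hl (by simp [*]) (by simp [hR]),
    by simp [keelPairs, pair_comm], by simp [keelPairs, pair_comm]⟩

theorem exists_keelPairs_of_disjoint (hR : #R = 5) {a b c d : β} (ha : a ∈ R) (hb : b ∈ R)
    (hc : c ∈ R) (hd : d ∈ R) (hl : [a, b, c, d].Nodup) :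
    ∃ P₁ P₂ P₃ P₄ P₅ : β, [P₁, P₂, P₃, P₄, P₅].Nodup ∧ R = [P₁, P₂, P₃, P₄, P₅].toFinset ∧
      {a, b} ∈ keelPairs P₁ P₂ P₄ P₅ ∧ {c, d} ∈ keelPairs P₁ P₂ P₄ P₅ := by
  have hrest : #(R \ [a, b, c, d].toFinset) = 1 := by
    rw [card_sdiff_of_subset (by simp [insert_subset_iff, *]), hR,
      List.toFinset_card_of_nodup hl]
    rfl
  obtain ⟨x, hx_eq⟩ := card_eq_one.1 hrest
  have hx : x ∈ R \ [a, b, c, d].toFinset := hx_eq ▸ mem_singleton_self x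
  simp only [mem_sdiff, List.mem_toFinset, List.mem_cons, List.not_mem_nil, or_false,
    not_or] at hx
  have hl' : [c, d, x, a, b].Nodup := by
    simp only [List.nodup_cons, List.mem_cons, List.not_mem_nil, or_false, not_or, List.nodup_nil,
      and_true] at hl ⊢
    grind
  exact ⟨c, d, x, a, b, hl', eq_toFinset_of_nodup hl' (by simp [*]) (by simp [hR]),
    by simp [keelPairs], by simp [keelPairs]⟩

theorem exists_keelPairs (hR : #R = 5) (he : e ⊆ R) (hf : f ⊆ R) (he2 : #e = 2) (hf2 : #f = 2)
    (hef : e ≠ f) :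
    ∃ P₁ P₂ P₃ P₄ P₅ : β, [P₁, P₂, P₃, P₄, P₅].Nodup ∧ R = [P₁, P₂, P₃, P₄, P₅].toFinset ∧
      e ∈ keelPairs P₁ P₂ P₄ P₅ ∧ f ∈ keelPairs P₁ P₂ P₄ P₅ := by
  rcases (e ∩ f).eq_empty_or_nonempty with hdisj | ⟨s, hs⟩
  · obtain ⟨a, b, hab, rfl⟩ := card_eq_two.1 he2
    obtain ⟨c, d, hcd, rfl⟩ := card_eq_two.1 hf2
    simp only [insert_subset_iff, singleton_subset_iff] at he hf
    refine exists_keelPairs_of_disjoint hR he.1 he.2 hf.1 hf.2 ?_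
    have hdisj' : Disjoint ({a, b} : Finset β) {c, d} := disjoint_iff_inter_eq_empty.2 hdisj
    simp only [disjoint_insert_left, disjoint_insert_right, disjoint_singleton_left, mem_insert,
      mem_singleton, not_or] at hdisj'
    simp only [List.nodup_cons, List.mem_cons, List.not_mem_nil, or_false, not_or, List.nodup_nil,
      and_true]
    grind
  · obtain ⟨u, hus, rfl⟩ := exists_eq_pair_of_mem (mem_inter.1 hs).1 he2
    obtain ⟨v, hvs, rfl⟩ := exists_eq_pair_of_mem (mem_inter.1 hs).2 hf2
    simp only [insert_subset_iff, singleton_subset_iff] at he hf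
    exact exists_keelPairs_of_adjacent hR he.1 he.2 hf.2 hus hvs (by rintro rfl; exact hef rfl)

end FiveElements

def keelPartitions (P₁ P₂ P₃ P₄ P₅ : Finset α) : Set (Finset (Finset α)) :=
  {{P₁, P₂, P₃, P₄ ∪ P₅}, {P₁ ∪ P₂, P₃, P₄, P₅}, {P₁, P₄, P₃, P₂ ∪ P₅}, {P₁ ∪ P₄, P₃, P₂, P₅}}

theorem keelPartitions_eq {P₁ P₂ P₃ P₄ P₅ : Finset α} (h : [P₁, P₂, P₃, P₄, P₅].Nodup) :
    keelPartitions P₁ P₂ P₃ P₄ P₅ =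
      mergeBlocks [P₁, P₂, P₃, P₄, P₅].toFinset '' keelPairs P₁ P₂ P₄ P₅ := by
  simp only [List.nodup_cons, List.mem_cons, List.not_mem_nil, or_false, not_or,
    List.nodup_nil, and_true] at h
  simp only [keelPartitions, keelPairs, coe_insert, coe_singleton, Set.image_insert_eq,
    Set.image_singleton]
  refine congrArg₂ insert ?_ (congrArg₂ insert ?_ (congrArg₂ insert ?_ (congrArg singleton ?_))) <;>
    ext X <;>
    simp only [mergeBlocks, mem_insert, mem_sdiff, List.toFinset_cons, List.toFinset_nil,
      mem_singleton, insert_empty_eq, sup_insert, sup_singleton, id] <;>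
    grind

section Keel

variable [Fintype α] {I J R e f : Finset (Finset α)}

def IsKeelPair (I J : Finset (Finset α)) : Prop :=
  ∃ P₁ P₂ P₃ P₄ P₅ : Finset α,
    P₁.Nonempty ∧ P₂.Nonempty ∧ P₃.Nonempty ∧ P₄.Nonempty ∧ P₅.Nonempty ∧
    Disjoint P₁ P₂ ∧ Disjoint P₁ P₃ ∧ Disjoint P₁ P₄ ∧ Disjoint P₁ P₅ ∧
    Disjoint P₂ P₃ ∧ Disjoint P₂ P₄ ∧ Disjoint P₂ P₅ ∧
    Disjoint P₃ P₄ ∧ Disjoint P₃ P₅ ∧ Disjoint P₄ P₅ ∧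
    P₁ ∪ P₂ ∪ P₃ ∪ P₄ ∪ P₅ = univ ∧
    I ∈ keelPartitions P₁ P₂ P₃ P₄ P₅ ∧ J ∈ keelPartitions P₁ P₂ P₃ P₄ P₅

theorem IsKeelPair.exists_mergeBlocks (h : IsKeelPair I J) :
    ∃ R : Finset (Finset α), #R = 5 ∧ (R : Set (Finset α)).PairwiseDisjoint id ∧
      (∀ Q ∈ R, Q.Nonempty) ∧ ∃ e ⊆ R, ∃ f ⊆ R, #e = 2 ∧ #f = 2 ∧
        I = mergeBlocks R e ∧ J = mergeBlocks R f := by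
  obtain ⟨P₁, P₂, P₃, P₄, P₅, h₁, h₂, h₃, h₄, h₅, d₁₂, d₁₃, d₁₄, d₁₅, d₂₃, d₂₄, d₂₅, d₃₄, d₃₅,
    d₄₅, -, hI, hJ⟩ := h
  set l := [P₁, P₂, P₃, P₄, P₅]
  have hne : ∀ P ∈ l, P.Nonempty := by simp [l, *]
  have hdisj : l.Pairwise Disjoint := by simp [l, *]
  have hl : l.Nodup := hdisj.imp_of_mem fun hP _ hPQ => hPQ.ne (hne _ hP).ne_empty
  rw [keelPartitions_eq hl] at hI hJ
  obtain ⟨e, he, rfl⟩ := hI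
  obtain ⟨f, hf, rfl⟩ := hJ
  obtain ⟨heR, he2⟩ := subset_and_card_of_mem_keelPairs hl he
  obtain ⟨hfR, hf2⟩ := subset_and_card_of_mem_keelPairs hl hf
  exact ⟨l.toFinset, List.toFinset_card_of_nodup hl,
    (List.pairwiseDisjoint_iff_coe_toFinset_pairwise_disjoint hl).2 hdisj,
    fun Q hQ => hne Q (List.mem_toFinset.1 hQ), e, heR, f, hfR, he2, hf2, rfl, rfl⟩

theorem isKeelPair_mergeBlocks (hR : #R = 5) (hdisj : (R : Set (Finset α)).PairwiseDisjoint id)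
    (hne : ∀ Q ∈ R, Q.Nonempty) (hsup : R.sup id = univ) (he : e ⊆ R) (hf : f ⊆ R)
    (he2 : #e = 2) (hf2 : #f = 2) (hef : e ≠ f) :
    IsKeelPair (mergeBlocks R e) (mergeBlocks R f) := by
  obtain ⟨P₁, P₂, P₃, P₄, P₅, hl, rfl, he', hf'⟩ := exists_keelPairs hR he hf he2 hf2 hef
  have hdisj' := (List.pairwiseDisjoint_iff_coe_toFinset_pairwise_disjoint hl).1 hdisj
  simp only [List.pairwise_cons, List.forall_mem_cons, List.not_mem_nil, IsEmpty.forall_iff,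
    implies_true, Function.onFun, id, List.Pairwise.nil, and_true] at hdisj'
  obtain ⟨⟨d₁₂, d₁₃, d₁₄, d₁₅⟩, ⟨d₂₃, d₂₄, d₂₅⟩, ⟨d₃₄, d₃₅⟩, d₄₅⟩ := hdisj'
  simp only [List.toFinset_cons, List.toFinset_nil, insert_empty_eq, mem_insert, mem_singleton,
    forall_eq_or_imp, forall_eq] at hne
  obtain ⟨h₁, h₂, h₃, h₄, h₅⟩ := hne
  refine ⟨P₁, P₂, P₃, P₄, P₅, h₁, h₂, h₃, h₄, h₅, d₁₂, d₁₃, d₁₄, d₁₅, d₂₃, d₂₄, d₂₅, d₃₄, d₃₅,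
    d₄₅, ?_, ?_, ?_⟩
  · simpa [union_assoc] using hsup
  · rw [keelPartitions_eq hl]
    exact Set.mem_image_of_mem _ he'
  · rw [keelPartitions_eq hl]
    exact Set.mem_image_of_mem _ hf'

end Keel

theorem stmt9 (n : ℕ) (I J : Finset (Finset (Fin n)))
    (hIcard : I.card = 4) (hJcard : J.card = 4)
    (hInon : ∀ A ∈ I, A.Nonempty) (hJnon : ∀ A ∈ J, A.Nonempty)
    (hIdisj : (I : Set (Finset (Fin n))).PairwiseDisjoint id)
    (hJdisj : (J : Set (Finset (Fin n))).PairwiseDisjoint id)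
    (hIuniv : I.sup id = Finset.univ) (hJuniv : J.sup id = Finset.univ)
    (hIJ : I ≠ J) :
    (∃ P₁ P₂ P₃ P₄ P₅ : Finset (Fin n),
      P₁.Nonempty ∧ P₂.Nonempty ∧ P₃.Nonempty ∧ P₄.Nonempty ∧ P₅.Nonempty ∧
      Disjoint P₁ P₂ ∧ Disjoint P₁ P₃ ∧ Disjoint P₁ P₄ ∧ Disjoint P₁ P₅ ∧
      Disjoint P₂ P₃ ∧ Disjoint P₂ P₄ ∧ Disjoint P₂ P₅ ∧
      Disjoint P₃ P₄ ∧ Disjoint P₃ P₅ ∧ Disjoint P₄ P₅ ∧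
      P₁ ∪ P₂ ∪ P₃ ∪ P₄ ∪ P₅ = Finset.univ ∧
      I ∈ ({{P₁, P₂, P₃, P₄ ∪ P₅}, {P₁ ∪ P₂, P₃, P₄, P₅},
            {P₁, P₄, P₃, P₂ ∪ P₅}, {P₁ ∪ P₄, P₃, P₂, P₅}} :
          Set (Finset (Finset (Fin n)))) ∧
      J ∈ ({{P₁, P₂, P₃, P₄ ∪ P₅}, {P₁ ∪ P₂, P₃, P₄, P₅},
            {P₁, P₄, P₃, P₂ ∪ P₅}, {P₁ ∪ P₄, P₃, P₂, P₅}} :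
          Set (Finset (Finset (Fin n)))))
    ↔ Set.ncard {S : Finset (Fin n) | S.Nonempty ∧ ∃ A ∈ I, ∃ B ∈ J, S = A ∩ B} = 5 := by
  rw [← coe_commonRefinement, Set.ncard_coe_finset]
  change IsKeelPair I J ↔ _
  constructor
  · intro h
    obtain ⟨R, hR, hdisj, hne, e, he, f, hf, he2, hf2, rfl, rfl⟩ := h.exists_mergeBlocks
    have hef : e ≠ f := by rintro rfl; exact hIJ rfl
    rw [commonRefinement_mergeBlocks hdisj hne he hf (card_inter_le_one_of_ne he2 hf2 hef), hR]
  · intro h5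
    obtain ⟨e, he, he2, hIe⟩ := exists_eq_mergeBlocks_commonRefinement hIdisj hInon
      (fun A _ => hJuniv ▸ subset_univ A) (by rw [h5, hIcard])
    obtain ⟨f, hf, hf2, hJf⟩ := exists_eq_mergeBlocks_commonRefinement hJdisj hJnon
      (fun B _ => hIuniv ▸ subset_univ B) (by rw [commonRefinement_comm, h5, hJcard])
    rw [commonRefinement_comm] at hf hJf
    have hkeel := isKeelPair_mergeBlocks h5 (pairwiseDisjoint_commonRefinement hIdisj hJdisj)
      (fun _ hS => (mem_commonRefinement.1 hS).1)
      (by rw [sup_commonRefinement, hIuniv, hJuniv, inter_self]) he hf he2 hf2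
      (by rintro rfl; exact hIJ (hIe.trans hJf.symm))
    rwa [← hIe, ← hJf] at hkeel
end
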